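/- Let F be as in the context (analytic reduced form, case 1). Let K̂ = (K̂^x, K̂^y) : (−ρ,ρ) → ℝ² and R̂ : (−ρ,ρ) → ℝ be real-analytic maps with K̂^x(t) = t² + O(t³), K̂^y(t) = K̂¹·t^{k+1} + O(t^{k+2}) and R̂(t) = t + R̂_k·t^k + O(t^{k+1}). If F(K̂(t)) − K̂(R̂(t)) = (O(t^{k+2}), O(t^{2k+1})), then c·K̂¹ = 2·R̂_k and a_k = (k+1)·K̂¹·R̂_k; in particular (K̂¹)² = 2·a_k/(c·(k+1)) and R̂_k = (c/2)·K̂¹. -/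

import Mathlib

/-!
Write `K̂ = (X, Y)` and `R̂(t) = t + d(t)`, so that `d(t) = R̂_k t^k + O(t^{k+1})`. Since `X` and
`Y` are analytic, their remainders `e(t) = t^{m+1} u(t)` (with `u` analytic, hence locally
Lipschitz) satisfy `e(R̂ t) - e(t) = O(t^m d(t))`, one order better than the naive bound.
Expanding both components of `F ∘ K̂ - K̂ ∘ R̂` with this, all terms cancel up to
`(c K̂¹ - 2 R̂_k) t^{k+1} + O(t^{k+2})` in the first component and
`(a_k - (k+1) K̂¹ R̂_k) t^{2k} + O(t^{2k+1})` in the second; the condition `k < 2l - 1` is what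
makes the `y q(x)` term negligible. Hence both leading coefficients vanish.
-/

open Set Filter

/-- `φ(t) = O(t^m)` for all sufficiently small `t > 0`. -/
def SmallO (φ : ℝ → ℝ) (m : ℕ) : Prop :=
  ∃ C > (0:ℝ), ∃ δ > (0:ℝ), ∀ t : ℝ, 0 < t → t < δ → |φ t| ≤ C * t ^ m

/-- `φ(x) = O(|x|^m)` as `x → 0`. -/
def SmallOabs (φ : ℝ → ℝ) (m : ℕ) : Prop :=
  ∃ C > (0:ℝ), ∃ δ > (0:ℝ), ∀ x : ℝ, |x| < δ → |φ x| ≤ C * |x| ^ m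

open Asymptotics Topology

theorem SmallO.isBigO {φ : ℝ → ℝ} {m : ℕ} (h : SmallO φ m) : φ =O[𝓝[>] 0] (· ^ m) := by
  obtain ⟨C, -, δ, hδ, hφ⟩ := h
  refine IsBigO.of_bound C ?_
  filter_upwards [Ioo_mem_nhdsGT hδ] with t ht
  rw [Real.norm_eq_abs, Real.norm_eq_abs, abs_of_pos (pow_pos ht.1 m)]
  exact hφ t ht.1 ht.2

theorem SmallOabs.isBigO {φ : ℝ → ℝ} {m : ℕ} (h : SmallOabs φ m) : φ =O[𝓝 0] (· ^ m) := by
  obtain ⟨C, -, δ, hδ, hφ⟩ := h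
  refine IsBigO.of_bound C ?_
  filter_upwards [Metric.ball_mem_nhds 0 hδ] with x hx
  rw [Real.norm_eq_abs, Real.norm_eq_abs, abs_pow]
  exact hφ x (by simpa using hx)

section Powers

variable {α 𝕜 : Type*} [NormedField 𝕜]

theorem isBigO_pow_pow_of_le {l : Filter 𝕜} (hl : l ≤ 𝓝 0) {m n : ℕ} (h : m ≤ n) :
    (fun t : 𝕜 => t ^ n) =O[l] (fun t => t ^ m) := by
  rcases h.eq_or_lt with rfl | h
  · exact isBigO_refl _ _
  · exact (isLittleO_pow_pow h).isBigO.mono hl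

theorem Asymptotics.IsBigO.mul_pow_pow {l : Filter 𝕜} {f g : 𝕜 → 𝕜} {a b n : ℕ}
    (hf : f =O[l] (· ^ a)) (hg : g =O[l] (· ^ b)) (hn : a + b = n := by omega) :
    (fun t => f t * g t) =O[l] (· ^ n) := by
  simpa only [← hn, pow_add] using hf.mul hg

variable {l : Filter α} {x y : α → 𝕜}

theorem isBigO_pow_sub_pow (h : x =O[l] y) (n : ℕ) :
    (fun t => x t ^ (n + 1) - y t ^ (n + 1)) =O[l] (fun t => y t ^ n * (x t - y t)) := by
  induction n with
  | zero => simpa using isBigO_refl (fun t => x t - y t) l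
  | succ n ih =>
    have key : ∀ t, x t ^ (n + 2) - y t ^ (n + 2)
        = x t * (x t ^ (n + 1) - y t ^ (n + 1)) + y t ^ (n + 1) * (x t - y t) :=
      fun t => by ring
    simp_rw [key]
    refine IsBigO.add ?_ (isBigO_refl _ _)
    simpa only [pow_succ', mul_assoc] using h.mul ih

theorem isBigO_pow_sub_pow_sub (h : x =O[l] y) (n : ℕ) :
    (fun t => x t ^ (n + 2) - y t ^ (n + 2) - (n + 2) * y t ^ (n + 1) * (x t - y t))
      =O[l] (fun t => y t ^ n * (x t - y t) ^ 2) := by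
  induction n with
  | zero => exact (isBigO_refl _ l).congr_left fun t => by push_cast; ring
  | succ n ih =>
    have key : ∀ t,
        x t ^ (n + 3) - y t ^ (n + 3) - ((n + 1 : ℕ) + 2) * y t ^ (n + 2) * (x t - y t)
          = x t * (x t ^ (n + 2) - y t ^ (n + 2) - (n + 2) * y t ^ (n + 1) * (x t - y t))
            + (n + 2) * (y t ^ (n + 1) * (x t - y t) ^ 2) :=
      fun t => by push_cast; ring
    simp_rw [key]
    refine IsBigO.add ?_ ((isBigO_refl _ _).const_mul_left _)
    simpa only [pow_succ', mul_assoc] using h.mul ih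

end Powers

section RightOfZero

theorem tendsto_pow_nhdsGT_zero {m : ℕ} (hm : m ≠ 0) :
    Tendsto (· ^ m) (𝓝[>] (0 : ℝ)) (𝓝 0) :=
  ((continuous_pow m).tendsto' 0 0 (zero_pow hm)).mono_left nhdsWithin_le_nhds

theorem isBigO_pow_of_isBigO_sub_mul_pow {f : ℝ → ℝ} {A : ℝ} {m n : ℕ} (hmn : m ≤ n)
    (h : (fun t => f t - A * t ^ m) =O[𝓝[>] 0] (· ^ n)) : f =O[𝓝[>] 0] (· ^ m) :=
  (h.trans (isBigO_pow_pow_of_le nhdsWithin_le_nhds hmn)).congr_of_sub.mpr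
    ((isBigO_refl _ _).const_mul_left A)

theorem eq_zero_of_mul_pow_isBigO_pow_succ {A : ℝ} {n : ℕ}
    (h : (fun t => A * t ^ n) =O[𝓝[>] 0] (· ^ (n + 1))) : A = 0 := by
  have hpos : ∀ᶠ t in 𝓝[>] (0 : ℝ), 0 < t := self_mem_nhdsWithin
  have hA : (fun _ => A) =O[𝓝[>] 0] (fun t : ℝ => t) := by
    refine ((isBigO_mul_iff_isBigO_div (hpos.mono fun t ht => pow_ne_zero n ht.ne')).mp
      (h.congr_left fun t => mul_comm _ _)).congr' EventuallyEq.rfl ?_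
    filter_upwards [hpos] with t ht
    rw [pow_succ, mul_div_cancel_left₀ _ (pow_ne_zero n ht.ne')]
  exact tendsto_const_nhds_iff.mp (hA.trans_tendsto nhdsWithin_le_nhds)

theorem AnalyticAt.exists_eventuallyEq_pow_mul_of_isBigO {g : ℝ → ℝ} (hg : AnalyticAt ℝ g 0)
    {m : ℕ} (hgO : g =O[𝓝[>] 0] (· ^ m)) :
    ∃ u : ℝ → ℝ, AnalyticAt ℝ u 0 ∧ ∀ᶠ t in 𝓝 0, g t = t ^ m * u t := by
  suffices (m : ℕ∞) ≤ analyticOrderAt g 0 by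
    simpa using (natCast_le_analyticOrderAt hg).mp this
  by_contra! hlt
  obtain ⟨n, hn⟩ := ENat.ne_top_iff_exists.mp hlt.ne_top
  obtain ⟨w, hw, hw0, hgw⟩ := hg.analyticOrderAt_eq_natCast.mp hn.symm
  have hnm : n < m := by exact_mod_cast hn ▸ hlt
  -- `w = g / t ^ n = O(t ^ (m - n))` on the right of `0`, so `w 0 = 0`
  have hwO : w =O[𝓝[>] 0] (· ^ (m - n)) := by
    have hpos : ∀ᶠ t in 𝓝[>] (0 : ℝ), 0 < t := self_mem_nhdsWithin
    have hgO' : (fun t => t ^ n * w t) =O[𝓝[>] 0] (· ^ m) :=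
      hgO.congr' (by filter_upwards [nhdsWithin_le_nhds hgw] with t ht using by simpa using ht)
        EventuallyEq.rfl
    refine ((isBigO_mul_iff_isBigO_div (hpos.mono fun t ht => pow_ne_zero n ht.ne')).mp
      hgO').congr' EventuallyEq.rfl ?_
    filter_upwards [hpos] with t ht
    rw [pow_sub₀ _ ht.ne' hnm.le, div_eq_mul_inv]
  exact hw0 (tendsto_nhds_unique (hw.continuousAt.tendsto.mono_left nhdsWithin_le_nhds)
    (hwO.trans_tendsto (tendsto_pow_nhdsGT_zero (by omega))))

theorem AnalyticAt.isBigO_comp_sub {g R : ℝ → ℝ} (hg : AnalyticAt ℝ g 0) {m : ℕ}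
    (hgO : g =O[𝓝[>] 0] (· ^ (m + 1))) (hR : R =O[𝓝[>] 0] (fun t => t)) :
    (fun t => g (R t) - g t) =O[𝓝[>] 0] (fun t => t ^ m * (R t - t)) := by
  obtain ⟨u, hu, hgu⟩ := hg.exists_eventuallyEq_pow_mul_of_isBigO hgO
  have hid : Tendsto (fun t : ℝ => t) (𝓝[>] 0) (𝓝 0) := nhdsWithin_le_nhds
  have hR0 : Tendsto R (𝓝[>] 0) (𝓝 0) := hR.trans_tendsto hid
  have hsplit : (fun t => g (R t) - g t) =ᶠ[𝓝[>] 0] fun t =>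
      (R t ^ (m + 1) - t ^ (m + 1)) * u (R t) + t ^ m * (t * (u (R t) - u t)) := by
    filter_upwards [hR0.eventually hgu, hid.eventually hgu] with t hRt ht
    rw [hRt, ht]
    ring
  refine (IsBigO.add ?_ ?_).congr' hsplit.symm EventuallyEq.rfl
  · simpa using (isBigO_pow_sub_pow hR m).mul ((hu.continuousAt.tendsto.comp hR0).isBigO_one ℝ)
  · have hu' : (fun t => u (R t) - u t) =O[𝓝[>] 0] (fun t => R t - t) :=
      hu.hasStrictDerivAt.hasStrictFDerivAt.isBigO_sub.comp_tendsto (hR0.prodMk_nhds hid)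
    simpa using (isBigO_refl (fun t : ℝ => t ^ m) _).mul ((hid.isBigO_one ℝ).mul hu')

variable {X Y R : ℝ → ℝ} {K1 Rk : ℝ} {k : ℕ}

theorem isBigO_id_of_isBigO_sub_id (hk : 1 ≤ k)
    (hR : (fun t => R t - t) =O[𝓝[>] 0] (· ^ k)) :
    R =O[𝓝[>] 0] (fun t => t) :=
  (hR.trans (by simpa using isBigO_pow_pow_of_le nhdsWithin_le_nhds hk)).congr_of_sub.mpr
    (isBigO_refl _ _)

variable (hk : 2 ≤ k)
  (hX : (fun t => X t - t ^ 2) =O[𝓝[>] 0] (· ^ 3))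
  (hY : (fun t => Y t - K1 * t ^ (k + 1)) =O[𝓝[>] 0] (· ^ (k + 2)))
  (hR : (fun t => R t - (t + Rk * t ^ k)) =O[𝓝[>] 0] (· ^ (k + 1)))
include hk hX hY hR

theorem mul_eq_of_invariance_fst {c : ℝ} (hXan : AnalyticAt ℝ X 0)
    (herr : (fun t => X t + c * Y t - X (R t)) =O[𝓝[>] 0] (· ^ (k + 2))) :
    c * K1 = 2 * Rk := by
  have hd : (fun t => R t - t) =O[𝓝[>] 0] (· ^ k) :=
    isBigO_pow_of_isBigO_sub_mul_pow (A := Rk) k.le_succ (hR.congr_left fun t => by ring)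
  have hXdiff : (fun t => (X (R t) - R t ^ 2) - (X t - t ^ 2)) =O[𝓝[>] 0] (· ^ (k + 2)) := by
    simpa [add_comm] using ((hXan.sub (analyticAt_id.pow 2)).isBigO_comp_sub (m := 2) hX
      (isBigO_id_of_isBigO_sub_id (by omega) hd)).trans
      ((isBigO_refl (· ^ 2) _).mul_pow_pow hd)
  have hsq : (fun t => (R t - t) * (R t - t)) =O[𝓝[>] 0] (· ^ (k + 2)) :=
    (hd.mul_pow_pow hd rfl).trans (isBigO_pow_pow_of_le nhdsWithin_le_nhds (by omega))
  have hrem : (fun t => 2 * (t ^ 1 * (R t - (t + Rk * t ^ k)))) =O[𝓝[>] 0] (· ^ (k + 2)) :=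
    ((isBigO_refl (· ^ 1) _).mul_pow_pow hR).const_mul_left 2
  refine eq_of_sub_eq_zero (eq_zero_of_mul_pow_isBigO_pow_succ (n := k + 1) ?_)
  exact ((((herr.add hXdiff).add hsq).add hrem).sub (hY.const_mul_left c)).congr_left
    fun t => by ring

theorem eq_mul_of_invariance_snd {p q H : ℝ → ℝ} {a : ℝ} {l : ℕ} (hkl : k < 2 * l - 1)
    (hYan : AnalyticAt ℝ Y 0)
    (hp : (fun x => p x - a * x ^ k) =O[𝓝 0] (· ^ (k + 1)))
    (hq : q =O[𝓝 0] (· ^ (l - 1)))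
    (hH : H =O[𝓝[>] 0] (fun _ => (1 : ℝ)))
    (herr : (fun t => Y t + (p (X t) + Y t * q (X t) + Y t ^ 2 * H t) - Y (R t))
      =O[𝓝[>] 0] (· ^ (2 * k + 1))) :
    a = (k + 1) * K1 * Rk := by
  obtain ⟨n, rfl⟩ : ∃ n, k = n + 2 := ⟨k - 2, by omega⟩
  have hle {i j : ℕ} (h : i ≤ j) : (fun t : ℝ => t ^ j) =O[𝓝[>] 0] (· ^ i) :=
    isBigO_pow_pow_of_le nhdsWithin_le_nhds h
  have hd : (fun t => R t - t) =O[𝓝[>] 0] (· ^ (n + 2)) :=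
    isBigO_pow_of_isBigO_sub_mul_pow (A := Rk) (by omega) (hR.congr_left fun t => by ring)
  have hRid := isBigO_id_of_isBigO_sub_id (by omega) hd
  have hXO : X =O[𝓝[>] 0] (· ^ 2) :=
    isBigO_pow_of_isBigO_sub_mul_pow (A := 1) (n := 3) (by omega) (by simpa using hX)
  have hYO : Y =O[𝓝[>] 0] (· ^ (n + 3)) := isBigO_pow_of_isBigO_sub_mul_pow (by omega) hY
  have hX0 : Tendsto X (𝓝[>] 0) (𝓝 0) := hXO.trans_tendsto (tendsto_pow_nhdsGT_zero two_ne_zero)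
  have hXpow (j : ℕ) : (fun t => X t ^ j) =O[𝓝[>] 0] (· ^ (2 * j)) := by
    simpa only [← pow_mul] using hXO.pow j
  have hXpow_sub : (fun t => a * (X t ^ (n + 2) - (t ^ 2) ^ (n + 2)))
      =O[𝓝[>] 0] (· ^ (2 * (n + 2) + 1)) := by
    refine ((isBigO_pow_sub_pow hXO (n + 1)).trans ?_).const_mul_left a
    simpa only [← pow_mul] using (isBigO_refl (· ^ (2 * (n + 1))) _).mul_pow_pow hX
  have hpX : (fun t => p (X t) - a * X t ^ (n + 2)) =O[𝓝[>] 0] (· ^ (2 * (n + 2) + 1)) :=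
    ((hp.comp_tendsto hX0).trans (hXpow (n + 3))).trans (hle (by omega))
  have hYqX : (fun t => Y t * q (X t)) =O[𝓝[>] 0] (· ^ (2 * (n + 2) + 1)) := by
    have hqX : (fun t => q (X t)) =O[𝓝[>] 0] (· ^ (2 * (l - 1))) :=
      (hq.comp_tendsto hX0).trans (hXpow (l - 1))
    exact (hYO.mul_pow_pow (n := n + 3 + 2 * (l - 1)) hqX).trans (hle (by omega))
  have hYsqH : (fun t => Y t ^ 2 * H t) =O[𝓝[>] 0] (· ^ (2 * (n + 2) + 1)) := by
    simpa [sq] using ((hYO.mul_pow_pow (n := 2 * n + 6) hYO).trans (hle (by omega))).mul hH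
  have hRtaylor : (fun t => K1 * (R t ^ (n + 3) - t ^ (n + 3)
      - ((n + 1 : ℕ) + 2) * t ^ (n + 2) * (R t - t))) =O[𝓝[>] 0] (· ^ (2 * (n + 2) + 1)) := by
    refine ((isBigO_pow_sub_pow_sub hRid (n + 1)).trans ?_).const_mul_left K1
    simpa [sq] using ((isBigO_refl (· ^ (n + 1)) _).mul_pow_pow
      (hd.mul_pow_pow hd rfl) rfl).trans (hle (by omega))
  have hRrem : (fun t => t ^ (n + 2) * (R t - (t + Rk * t ^ (n + 2))))
      =O[𝓝[>] 0] (· ^ (2 * (n + 2) + 1)) :=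
    (isBigO_refl _ _).mul_pow_pow hR
  have hYdiff : (fun t => (Y (R t) - K1 * R t ^ (n + 3)) - (Y t - K1 * t ^ (n + 3)))
      =O[𝓝[>] 0] (· ^ (2 * (n + 2) + 1)) := by
    simpa using ((hYan.sub (analyticAt_const.mul (analyticAt_id.pow (n + 3)))).isBigO_comp_sub
      (m := n + 3) hY hRid).trans ((isBigO_refl _ _).mul_pow_pow hd)
  refine eq_of_sub_eq_zero (eq_zero_of_mul_pow_isBigO_pow_succ (n := 2 * (n + 2)) ?_)
  exact (((((((herr.sub hXpow_sub).sub hpX).sub hYqX).sub hYsqH).add hRtaylor).add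
    (hRrem.const_mul_left (K1 * ((n + 2 : ℕ) + 1)))).add hYdiff).congr_left
    fun t => by push_cast; ring

end RightOfZero

theorem stmt_18_general
    (U : Set (ℝ × ℝ)) (hU : U ∈ nhds (0 : ℝ × ℝ))
    (F : ℝ × ℝ → ℝ × ℝ) (c : ℝ) (hc : 0 < c)
    (f : ℝ × ℝ → ℝ)
    (hFform : ∀ z ∈ U, F z = (z.1 + c * z.2, z.2 + f z))
    (p q : ℝ → ℝ) (h : ℝ × ℝ → ℝ)
    (hhan : AnalyticAt ℝ h 0)
    (hdecomp : ∀ z ∈ U, f z = p z.1 + z.2 * q z.1 + z.2 ^ 2 * h z)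
    (k l : ℕ) (hk : 2 ≤ k) (hkl : k < 2 * l - 1)
    (a : ℝ)
    (hp : SmallOabs (fun x => p x - a * x ^ k) (k + 1))
    (hq : SmallOabs q (l - 1))
    (ρ : ℝ) (hρ : 0 < ρ)
    (Khat : ℝ → ℝ × ℝ) (Rhat : ℝ → ℝ)
    (hKhatan : AnalyticOnNhd ℝ Khat (Ioo (-ρ) ρ))
    (K1 Rk : ℝ)
    (hKx : SmallO (fun t => (Khat t).1 - t ^ 2) 3)
    (hKy : SmallO (fun t => (Khat t).2 - K1 * t ^ (k + 1)) (k + 2))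
    (hR : SmallO (fun t => Rhat t - (t + Rk * t ^ k)) (k + 1))
    (herrx : SmallO (fun t => (F (Khat t)).1 - (Khat (Rhat t)).1) (k + 2))
    (herry : SmallO (fun t => (F (Khat t)).2 - (Khat (Rhat t)).2) (2 * k + 1)) :
    c * K1 = 2 * Rk ∧ a = ((k:ℝ) + 1) * K1 * Rk ∧
    K1 ^ 2 = 2 * a / (c * ((k:ℝ) + 1)) ∧ Rk = c / 2 * K1 := by
  have hKan : AnalyticAt ℝ Khat 0 := hKhatan 0 ⟨by linarith, hρ⟩
  have hX := hKx.isBigO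
  have hY := hKy.isBigO
  have hK0 : Tendsto Khat (𝓝[>] 0) (𝓝 0) := by
    refine (Prod.tendsto_iff _ _).2 ⟨?_, ?_⟩
    · exact (isBigO_pow_of_isBigO_sub_mul_pow (A := 1) (n := 3) (by omega)
        (by simpa using hX)).trans_tendsto (tendsto_pow_nhdsGT_zero two_ne_zero)
    · exact (isBigO_pow_of_isBigO_sub_mul_pow (by omega) hY).trans_tendsto
        (tendsto_pow_nhdsGT_zero (by omega))
  have hKU : ∀ᶠ t in 𝓝[>] 0, Khat t ∈ U := hK0 hU
  have hfst := mul_eq_of_invariance_fst (c := c) hk hX hY hR.isBigO (analyticAt_fst.comp hKan)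
    (herrx.isBigO.congr' (hKU.mono fun t ht => by simp [hFform _ ht]) EventuallyEq.rfl)
  have hsnd := eq_mul_of_invariance_snd hk hX hY hR.isBigO hkl (analyticAt_snd.comp hKan)
    hp.isBigO hq.isBigO ((hhan.continuousAt.tendsto.comp hK0).isBigO_one ℝ)
    (herry.isBigO.congr' (hKU.mono fun t ht => by simp [hFform _ ht, hdecomp _ ht])
      EventuallyEq.rfl)
  refine ⟨hfst, hsnd, ?_, by linarith⟩
  rw [eq_div_iff (by positivity)]
  linear_combination ((k + 1) * K1) * hfst - 2 * hsnd

/-- Remark 2.2 (case 1): the order conditions on the approximate invariance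
equation force the relations `c K̂¹ = 2 R̂_k` and `a_k = (k+1) K̂¹ R̂_k`, hence
`(K̂¹)² = 2 a_k / (c (k+1))` and `R̂_k = (c/2) K̂¹`. -/
theorem stmt_18
    (U : Set (ℝ × ℝ)) (hU : U ∈ nhds (0 : ℝ × ℝ))
    (F : ℝ × ℝ → ℝ × ℝ) (c : ℝ) (hc : 0 < c)
    (f : ℝ × ℝ → ℝ) (hfan : AnalyticOnNhd ℝ f U)
    (hf0 : f 0 = 0) (hDf : fderiv ℝ f 0 = 0)
    (hFform : ∀ z ∈ U, F z = (z.1 + c * z.2, z.2 + f z))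
    (p q : ℝ → ℝ) (h : ℝ × ℝ → ℝ)
    (hpan : AnalyticAt ℝ p 0) (hqan : AnalyticAt ℝ q 0) (hhan : AnalyticAt ℝ h 0)
    (hdecomp : ∀ z ∈ U, f z = p z.1 + z.2 * q z.1 + z.2 ^ 2 * h z)
    (k l : ℕ) (hk : 2 ≤ k) (hl : 2 ≤ l) (hkl : k < 2 * l - 1)
    (a : ℝ) (ha : a ≠ 0)
    (hp : SmallOabs (fun x => p x - a * x ^ k) (k + 1))
    (hq : SmallOabs q (l - 1))
    (ρ : ℝ) (hρ : 0 < ρ)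
    (Khat : ℝ → ℝ × ℝ) (Rhat : ℝ → ℝ)
    (hKhatan : AnalyticOnNhd ℝ Khat (Ioo (-ρ) ρ))
    (hRhatan : AnalyticOnNhd ℝ Rhat (Ioo (-ρ) ρ))
    (K1 Rk : ℝ)
    (hKx : SmallO (fun t => (Khat t).1 - t ^ 2) 3)
    (hKy : SmallO (fun t => (Khat t).2 - K1 * t ^ (k + 1)) (k + 2))
    (hR : SmallO (fun t => Rhat t - (t + Rk * t ^ k)) (k + 1))
    (herrx : SmallO (fun t => (F (Khat t)).1 - (Khat (Rhat t)).1) (k + 2))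
    (herry : SmallO (fun t => (F (Khat t)).2 - (Khat (Rhat t)).2) (2 * k + 1)) :
    c * K1 = 2 * Rk ∧ a = ((k:ℝ) + 1) * K1 * Rk ∧
    K1 ^ 2 = 2 * a / (c * ((k:ℝ) + 1)) ∧ Rk = c / 2 * K1 :=
  stmt_18_general U hU F c hc f hFform p q h hhan hdecomp k l hk hkl a hp hq ρ hρ Khat Rhat hKhatan
    K1 Rk hKx hKy hR herrx herry
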